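/- arXiv:2211.12795 — 6 statements merged into one kernel-verified Lean document; each statement's English description precedes it below -/
import Mathlib

section
/- Let Γ be an infinite cardinal and 𝒜 ⊆ [Γ]^Γ an almost disjoint family. For each A ∈ 𝒜, the indicator function 1_A (an element of ℓ_∞(Γ)) has distance at least 1 in the supremum norm from every element of the linear span of {1_{A_1 ∩ ... ∩ A_n} : n ≥ 2, A_1,...,A_n ∈ 𝒜 pairwise distinct}. In particular, 1_A does not belong to the closure Z_𝒜 of this span. -/
open Cardinal Set

noncomputable def ind {Γ : Type*} (A : Set Γ) : lp (fun _ : Γ => ℝ) ⊤ :=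
  ⟨A.indicator 1, memℓp_infty ⟨1, by
    rintro r ⟨γ, rfl⟩
    by_cases h : γ ∈ A <;> simp [Set.indicator_apply, h]⟩⟩

def AlmostDisjoint {Γ : Type*} (𝒜 : Set (Set Γ)) : Prop :=
  (∀ A ∈ 𝒜, #A = #Γ) ∧ ∀ A ∈ 𝒜, ∀ B ∈ 𝒜, A ≠ B → #(↥(A ∩ B)) < #Γ

noncomputable def Ysub {Γ : Type*} (𝒜 : Set (Set Γ)) : Submodule ℝ (lp (fun _ : Γ => ℝ) ⊤) :=
  (Submodule.span ℝ
    {y | ∃ (n : ℕ) (A : Fin (n + 1) → Set Γ), (∀ i, A i ∈ 𝒜) ∧ y = ind (⋂ i, A i)}).topologicalClosure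

def Zgen {Γ : Type*} (𝒜 : Set (Set Γ)) : Set (lp (fun _ : Γ => ℝ) ⊤) :=
  {y | ∃ (n : ℕ) (A : Fin (n + 2) → Set Γ),
    (∀ i, A i ∈ 𝒜) ∧ Function.Injective A ∧ y = ind (⋂ i, A i)}

noncomputable def Zsub {Γ : Type*} (𝒜 : Set (Set Γ)) : Submodule ℝ (lp (fun _ : Γ => ℝ) ⊤) :=
  (Submodule.span ℝ (Zgen 𝒜)).topologicalClosure

lemma span_small_support {Γ : Type*} [Infinite Γ] (𝒜 : Set (Set Γ))
    (h𝒜 : AlmostDisjoint 𝒜) (z : lp (fun _ : Γ => ℝ) ⊤)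
    (hz : z ∈ Submodule.span ℝ (Zgen 𝒜)) :
    ∃ U : Set Γ, #U < #Γ ∧ ∀ γ ∉ U, (z : Γ → ℝ) γ = 0 := by
  induction hz using Submodule.span_induction with
  | mem y hy =>
    obtain ⟨n, B, hB, hinj, rfl⟩ := hy
    refine ⟨⋂ i, B i, ?_, ?_⟩
    · have hsub : (⋂ i, B i) ⊆ B 0 ∩ B 1 := by
        intro x hx
        exact ⟨mem_iInter.1 hx 0, mem_iInter.1 hx 1⟩
      have hne : B 0 ≠ B 1 := fun h => by
        have := hinj h; simp at this
      exact lt_of_le_of_lt (Cardinal.mk_le_mk_of_subset hsub)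
        (h𝒜.2 _ (hB 0) _ (hB 1) hne)
    · intro γ hγ
      show Set.indicator (⋂ i, B i) 1 γ = 0
      exact Set.indicator_of_notMem hγ _
  | zero => exact ⟨∅, by simpa using Cardinal.aleph0_pos.trans_le (Cardinal.aleph0_le_mk Γ),
      fun γ _ => rfl⟩
  | add x y hx hy ihx ihy =>
    obtain ⟨U, hU, hUz⟩ := ihx
    obtain ⟨V, hV, hVz⟩ := ihy
    refine ⟨U ∪ V, ?_, fun γ hγ => ?_⟩
    · exact lt_of_le_of_lt (Cardinal.mk_union_le U V)
        (Cardinal.add_lt_of_lt (Cardinal.aleph0_le_mk Γ) hU hV)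
    · have h1 := hUz γ (fun h => hγ (Or.inl h))
      have h2 := hVz γ (fun h => hγ (Or.inr h))
      have : ((x + y : lp (fun _ : Γ => ℝ) ⊤) : Γ → ℝ) γ = (x : Γ → ℝ) γ + (y : Γ → ℝ) γ := rfl
      rw [this, h1, h2, add_zero]
  | smul c x hx ihx =>
    obtain ⟨U, hU, hUz⟩ := ihx
    refine ⟨U, hU, fun γ hγ => ?_⟩
    have : ((c • x : lp (fun _ : Γ => ℝ) ⊤) : Γ → ℝ) γ = c * (x : Γ → ℝ) γ := rfl
    rw [this, hUz γ hγ, mul_zero]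

theorem indicator_far_from_Zspan {Γ : Type*} [Infinite Γ] (𝒜 : Set (Set Γ))
    (h𝒜 : AlmostDisjoint 𝒜) (A : Set Γ) (hA : A ∈ 𝒜) :
    (∀ z ∈ Submodule.span ℝ (Zgen 𝒜), 1 ≤ ‖ind A - z‖) ∧ ind A ∉ Zsub 𝒜 := by
  have key : ∀ z ∈ Submodule.span ℝ (Zgen 𝒜), 1 ≤ ‖ind A - z‖ := by
    intro z hz
    obtain ⟨U, hU, hUz⟩ := span_small_support 𝒜 h𝒜 z hz
    have hAU : ¬ A ⊆ U := by
      intro h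
      exact absurd (lt_of_le_of_lt ((h𝒜.1 A hA ▸ Cardinal.mk_le_mk_of_subset h)) hU)
        (lt_irrefl _)
    obtain ⟨γ, hγA, hγU⟩ := Set.not_subset.1 hAU
    have h1 : ((ind A - z : lp (fun _ : Γ => ℝ) ⊤) : Γ → ℝ) γ = 1 := by
      have : ((ind A - z : lp (fun _ : Γ => ℝ) ⊤) : Γ → ℝ) γ
          = (ind A : Γ → ℝ) γ - (z : Γ → ℝ) γ := rfl
      rw [this, hUz γ hγU, sub_zero]
      show Set.indicator A 1 γ = 1
      simp [Set.indicator_of_mem hγA]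
    calc (1 : ℝ) = ‖((ind A - z : lp (fun _ : Γ => ℝ) ⊤) : Γ → ℝ) γ‖ := by rw [h1]; simp
      _ ≤ ‖ind A - z‖ := lp.norm_apply_le_norm (by norm_num) _ γ
  refine ⟨key, fun hmem => ?_⟩
  have : ind A ∈ closure ((Submodule.span ℝ (Zgen 𝒜) : Submodule ℝ _) : Set _) := hmem
  obtain ⟨z, hz, hdist⟩ := Metric.mem_closure_iff.1 this 1 one_pos
  exact absurd (lt_of_le_of_lt (key z hz) (by rwa [dist_eq_norm] at hdist)) (lt_irrefl _)
end

section
/- Let Γ be an infinite cardinal and 𝒜 ⊆ [Γ]^Γ an almost disjoint family of cardinality greater than Γ. Let Y_𝒜 be the closed linear span in ℓ_∞(Γ) of all indicator functions 1_{A_1 ∩ ... ∩ A_n} with n ≥ 1 and A_1,...,A_n ∈ 𝒜, and Z_𝒜 the closed linear span of those with n ≥ 2 and A_1,...,A_n pairwise distinct. Then Z_𝒜 is a proper closed subspace of Y_𝒜, and moreover Z_𝒜 ≠ Y_{𝒜'} for every subset 𝒜' ⊆ 𝒜. -/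
open Cardinal Set

lemma ind_apply {Γ : Type*} (A : Set Γ) (γ : Γ) : (ind A) γ = A.indicator 1 γ := rfl

lemma small_span {Γ : Type*} [Infinite Γ] {𝒜 : Set (Set Γ)} (h𝒜 : AlmostDisjoint 𝒜)
    {w : lp (fun _ : Γ => ℝ) ⊤} (hw : w ∈ Submodule.span ℝ (Zgen 𝒜)) :
    ∀ ε : ℝ, 0 < ε → #{γ : Γ | ε ≤ |w γ|} < #Γ := by
  induction hw using Submodule.span_induction with
  | mem x hx =>
    intro ε hε
    obtain ⟨n, A, hA, hinj, rfl⟩ := hx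
    have hsub : {γ : Γ | ε ≤ |(ind (⋂ i, A i)) γ|} ⊆ A 0 ∩ A 1 := by
      intro γ hγ
      by_contra h
      have h0 : γ ∉ ⋂ i, A i := fun hm => h ⟨Set.mem_iInter.1 hm 0, Set.mem_iInter.1 hm 1⟩
      simp only [Set.mem_setOf_eq, ind_apply, Set.indicator_of_notMem h0, abs_zero] at hγ
      linarith
    refine lt_of_le_of_lt (Cardinal.mk_le_mk_of_subset hsub)
      (h𝒜.2 _ (hA 0) _ (hA 1) fun h => ?_)
    simpa using hinj h
  | zero =>
    intro ε hε
    have h0 : {γ : Γ | ε ≤ |(0 : lp (fun _ : Γ => ℝ) ⊤) γ|} = ∅ := by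
      ext γ; simp [hε.not_ge]
    rw [h0, Cardinal.mk_emptyCollection]
    exact Cardinal.aleph0_pos.trans_le (Cardinal.aleph0_le_mk Γ)
  | add x y hx hy ihx ihy =>
    intro ε hε
    have hsub : {γ : Γ | ε ≤ |(x + y) γ|} ⊆
        {γ : Γ | ε / 2 ≤ |x γ|} ∪ {γ : Γ | ε / 2 ≤ |y γ|} := by
      intro γ hγ
      by_contra h
      simp only [Set.mem_union, Set.mem_setOf_eq, not_or, not_le] at h
      obtain ⟨h1, h2⟩ := h
      have : |(x + y) γ| ≤ |x γ| + |y γ| := by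
        rw [lp.coeFn_add]; exact abs_add_le _ _
      have := hγ.trans this
      linarith
    refine lt_of_le_of_lt (Cardinal.mk_le_mk_of_subset hsub) ?_
    refine lt_of_le_of_lt (Cardinal.mk_union_le _ _) ?_
    exact Cardinal.add_lt_of_lt (Cardinal.aleph0_le_mk Γ)
      (ihx _ (half_pos hε)) (ihy _ (half_pos hε))
  | smul a x hx ih =>
    intro ε hε
    rcases eq_or_ne a 0 with rfl | ha
    · have h0 : {γ : Γ | ε ≤ |((0 : ℝ) • x) γ|} = ∅ := by
        ext γ
        simp [lp.coeFn_smul, Pi.smul_apply, hε.not_ge]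
      rw [h0, Cardinal.mk_emptyCollection]
      exact Cardinal.aleph0_pos.trans_le (Cardinal.aleph0_le_mk Γ)
    · have hsub : {γ : Γ | ε ≤ |(a • x) γ|} ⊆ {γ : Γ | ε / |a| ≤ |x γ|} := by
        intro γ hγ
        simp only [Set.mem_setOf_eq, lp.coeFn_smul, Pi.smul_apply, smul_eq_mul,
          abs_mul] at hγ ⊢
        rw [div_le_iff₀ (abs_pos.2 ha)]
        linarith [hγ]
      exact lt_of_le_of_lt (Cardinal.mk_le_mk_of_subset hsub)
        (ih _ (div_pos hε (abs_pos.2 ha)))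

lemma small_Zsub {Γ : Type*} [Infinite Γ] {𝒜 : Set (Set Γ)} (h𝒜 : AlmostDisjoint 𝒜)
    {z : lp (fun _ : Γ => ℝ) ⊤} (hz : z ∈ Zsub 𝒜) :
    ∀ ε : ℝ, 0 < ε → #{γ : Γ | ε ≤ |z γ|} < #Γ := by
  intro ε hε
  have hz' : z ∈ closure ((Submodule.span ℝ (Zgen 𝒜) : Submodule ℝ _) : Set _) := by
    rw [← Submodule.topologicalClosure_coe]; exact hz
  obtain ⟨w, hwmem, hwdist⟩ := Metric.mem_closure_iff.1 hz' (ε / 2) (half_pos hε)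
  have hsub : {γ : Γ | ε ≤ |z γ|} ⊆ {γ : Γ | ε / 2 ≤ |w γ|} := by
    intro γ hγ
    simp only [Set.mem_setOf_eq] at hγ ⊢
    have h1 : ‖(z - w) γ‖ ≤ ‖z - w‖ := lp.norm_apply_le_norm ENNReal.top_ne_zero _ γ
    have h2 : (z - w) γ = z γ - w γ := by rw [lp.coeFn_sub]; rfl
    rw [h2] at h1
    have h3 : ‖z - w‖ < ε / 2 := by rwa [← dist_eq_norm]
    have h4 : |z γ - w γ| < ε / 2 := lt_of_le_of_lt h1 h3
    have := abs_sub_abs_le_abs_sub (z γ) (w γ)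
    linarith
  exact lt_of_le_of_lt (Cardinal.mk_le_mk_of_subset hsub)
    (small_span h𝒜 hwmem _ (half_pos hε))

lemma ind_mem_Ysub {Γ : Type*} {𝒜 : Set (Set Γ)} {A : Set Γ} (hA : A ∈ 𝒜) :
    ind A ∈ Ysub 𝒜 := by
  apply Submodule.le_topologicalClosure
  apply Submodule.subset_span
  exact ⟨0, fun _ => A, fun _ => hA, by rw [Set.iInter_const]⟩

lemma ind_notMem_Zsub {Γ : Type*} [Infinite Γ] {𝒜 : Set (Set Γ)} (h𝒜 : AlmostDisjoint 𝒜)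
    {A : Set Γ} (hA : A ∈ 𝒜) : ind A ∉ Zsub 𝒜 := by
  intro hmem
  have hsmall := small_Zsub h𝒜 hmem 1 one_pos
  have hsub : A ⊆ {γ : Γ | (1 : ℝ) ≤ |(ind A) γ|} := by
    intro γ hγ
    simp [ind_apply, Set.indicator_of_mem hγ]
  have := lt_of_le_of_lt (Cardinal.mk_le_mk_of_subset hsub) hsmall
  rw [h𝒜.1 A hA] at this
  exact lt_irrefl _ this

set_option synthInstance.maxHeartbeats 1000000 in
set_option maxHeartbeats 1000000 in
theorem Zsub_proper_subspace {Γ : Type*} [Infinite Γ] (𝒜 : Set (Set Γ))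
    (h𝒜 : AlmostDisjoint 𝒜) (hcard : #Γ < #𝒜) :
    (∀ 𝒜' ⊆ 𝒜, Zsub 𝒜 ≠ Ysub 𝒜') ∧ Zsub 𝒜 < Ysub 𝒜 := by
  -- there exist distinct A, B ∈ 𝒜 with nonempty intersection
  have hex : ∃ A ∈ 𝒜, ∃ B ∈ 𝒜, A ≠ B ∧ (A ∩ B).Nonempty := by
    by_contra h
    push_neg at h
    have hne : ∀ A ∈ 𝒜, A.Nonempty := by
      intro A hA
      rw [← Set.nonempty_coe_sort, ← Cardinal.mk_ne_zero_iff, h𝒜.1 A hA]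
      exact Cardinal.mk_ne_zero Γ
    choose f hf using fun (A : ↥𝒜) => hne A.1 A.2
    have hinj : Function.Injective f := by
      intro A B hAB
      by_contra hne'
      have hne'' : A.1 ≠ B.1 := fun e => hne' (Subtype.ext e)
      have hdisj := h A.1 A.2 B.1 B.2 hne''
      have : f A ∈ A.1 ∩ B.1 := ⟨hf A, hAB ▸ hf B⟩
      rw [hdisj] at this
      exact this
    exact absurd (Cardinal.mk_le_of_injective hinj) (not_le.2 hcard)
  obtain ⟨A, hA, B, hB, hAB, ⟨γ₀, hγ₀⟩⟩ := hex
  -- ind (A ∩ B) is a nonzero element of Zsub 𝒜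
  have hZmem : ind (A ∩ B) ∈ Zsub 𝒜 := by
    apply Submodule.le_topologicalClosure
    apply Submodule.subset_span
    refine ⟨0, ![A, B], ?_, ?_, ?_⟩
    · intro i; fin_cases i <;> simpa using ‹_›
    · intro i j hij
      fin_cases i <;> fin_cases j <;> simp_all
    · congr 1
      ext γ
      simp [Set.mem_iInter, Fin.forall_fin_two]
  have hne0 : ind (A ∩ B) ≠ 0 := by
    intro h0
    have : (ind (A ∩ B)) γ₀ = (0 : lp (fun _ : Γ => ℝ) ⊤) γ₀ := by rw [h0]
    rw [ind_apply, Set.indicator_of_mem hγ₀] at this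
    simp at this
  -- Ysub ∅ = ⊥
  have hY0 : Ysub (∅ : Set (Set Γ)) = ⊥ := by
    have hempty : {y : lp (fun _ : Γ => ℝ) ⊤ | ∃ (n : ℕ) (A : Fin (n + 1) → Set Γ),
        (∀ i, A i ∈ (∅ : Set (Set Γ))) ∧ y = ind (⋂ i, A i)} = ∅ := by
      ext y
      simp only [Set.mem_setOf_eq, Set.mem_empty_iff_false, iff_false]
      rintro ⟨n, A', hA', -⟩
      exact hA' 0
    rw [Ysub, hempty, Submodule.span_empty]
    refine le_antisymm (Submodule.topologicalClosure_minimal _ le_rfl ?_)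
      (Submodule.le_topologicalClosure _)
    rw [Submodule.bot_coe]
    exact isClosed_singleton
  -- Zsub 𝒜 ≤ Ysub 𝒜
  have hle : Zsub 𝒜 ≤ Ysub 𝒜 := by
    apply Submodule.topologicalClosure_mono
    apply Submodule.span_mono
    rintro y ⟨n, A', hA', -, rfl⟩
    exact ⟨n + 1, A', hA', rfl⟩
  constructor
  · intro 𝒜' hsub heq
    rcases Set.eq_empty_or_nonempty 𝒜' with rfl | ⟨A', hA'⟩
    · rw [hY0] at heq
      exact hne0 ((Submodule.mem_bot ℝ).1 (heq ▸ hZmem))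
    · exact ind_notMem_Zsub h𝒜 (hsub hA') (heq ▸ ind_mem_Ysub hA')
  · refine lt_of_le_of_ne hle fun heq => ?_
    exact ind_notMem_Zsub h𝒜 hA (heq ▸ ind_mem_Ysub hA)
end

section
/- Let A_1,...,A_m be distinct members of an almost disjoint family 𝒜 ⊆ [Γ]^Γ and σ_1,...,σ_m scalars with |σ_j| = 1 for all j. Then the vector y = ∑_j σ_j 1_{A_j} differs from an element z of the closed span Z_𝒜 (namely z = ∑_{N⊆{1,...,m}, |N|≥2} (−1)^{|N|} (∑_{j∈N} σ_j) 1_{⋂_{j∈N} A_j}) by a function of supremum norm at most 1. -/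
open Cardinal Set

lemma aux_pow_card {ι : Type*} [DecidableEq ι] (T : Finset ι) :
    ∑ N ∈ T.powerset, (-1 : ℝ) ^ N.card = if T = ∅ then 1 else 0 := by
  have h := Finset.sum_powerset_neg_one_pow_card (x := T)
  calc ∑ N ∈ T.powerset, (-1 : ℝ) ^ N.card
      = ((∑ N ∈ T.powerset, (-1 : ℤ) ^ N.card : ℤ) : ℝ) := by push_cast; rfl
    _ = _ := by rw [h]; split <;> norm_num

lemma F_eq {ι : Type*} [DecidableEq ι] (σ : ι → ℝ) (T : Finset ι) :
    ∑ N ∈ T.powerset, (-1 : ℝ) ^ N.card * ∑ j ∈ N, σ j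
      = if T.card = 1 then -∑ j ∈ T, σ j else 0 := by
  induction T using Finset.induction_on with
  | empty => simp
  | @insert a s h ih =>
    rw [Finset.sum_powerset_insert h]
    have key : ∀ t ∈ s.powerset, (-1 : ℝ) ^ (insert a t).card * ∑ j ∈ insert a t, σ j
        = (-((-1 : ℝ) ^ t.card * σ a)) + (-((-1 : ℝ) ^ t.card * ∑ j ∈ t, σ j)) := by
      intro t ht
      have hat : a ∉ t := fun hc => h (Finset.mem_powerset.mp ht hc)
      rw [Finset.card_insert_of_notMem hat, Finset.sum_insert hat]
      ring
    rw [Finset.sum_congr rfl key, Finset.sum_add_distrib, Finset.sum_neg_distrib,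
      Finset.sum_neg_distrib, ih, ← Finset.sum_mul, aux_pow_card]
    rw [Finset.card_insert_of_notMem h]
    by_cases hs : s = ∅
    · subst hs; simp
    · have h1 : s.card ≠ 0 := fun hc => hs (Finset.card_eq_zero.mp hc)
      rw [if_neg hs, if_neg (by omega : ¬ s.card + 1 = 1)]
      by_cases hs1 : s.card = 1 <;> simp [hs1]

lemma key_sum {ι : Type*} [DecidableEq ι] (σ : ι → ℝ) (T : Finset ι) :
    ∑ N ∈ T.powerset.filter (fun N => 2 ≤ N.card), (-1 : ℝ) ^ N.card * ∑ j ∈ N, σ j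
      = if 2 ≤ T.card then ∑ j ∈ T, σ j else 0 := by
  have hsplit := Finset.sum_filter_add_sum_filter_not T.powerset (fun N => 2 ≤ N.card)
      (fun N => (-1 : ℝ) ^ N.card * ∑ j ∈ N, σ j)
  have hfe : T.powerset.filter (fun N => ¬ 2 ≤ N.card)
      = T.powerset.filter (fun N => N.card = 0) ∪ T.powerset.filter (fun N => N.card = 1) := by
    rw [← Finset.filter_or]
    exact Finset.filter_congr (fun N _ => by omega)
  have hdisj : Disjoint (T.powerset.filter (fun N => N.card = 0))
      (T.powerset.filter (fun N => N.card = 1)) := by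
    rw [Finset.disjoint_left]
    intro N h0 h1
    rw [Finset.mem_filter] at h0 h1
    omega
  have hsmall : ∑ N ∈ T.powerset.filter (fun N => ¬ 2 ≤ N.card),
      (-1 : ℝ) ^ N.card * ∑ j ∈ N, σ j = -∑ j ∈ T, σ j := by
    rw [hfe, Finset.sum_union hdisj, ← Finset.powersetCard_eq_filter,
      ← Finset.powersetCard_eq_filter, Finset.powersetCard_zero, Finset.powersetCard_one,
      Finset.sum_map, Finset.sum_singleton]
    simp
  have hF := F_eq σ T
  by_cases h2 : 2 ≤ T.card
  · have h1 : ¬ T.card = 1 := by omega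
    rw [if_pos h2]
    rw [if_neg h1] at hF
    linarith [hsplit, hsmall, hF]
  · rw [if_neg h2]
    by_cases h1 : T.card = 1
    · rw [if_pos h1] at hF
      linarith [hsplit, hsmall, hF]
    · have h0 : T = ∅ := Finset.card_eq_zero.mp (by omega)
      subst h0
      rw [Finset.powerset_empty, Finset.filter_singleton]
      simp

noncomputable def evalLM {Γ : Type*} (γ : Γ) : lp (fun _ : Γ => ℝ) ⊤ →ₗ[ℝ] ℝ where
  toFun f := f γ
  map_add' f g := congrFun (lp.coeFn_add f g) γ
  map_smul' c f := congrFun (lp.coeFn_smul c f) γ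

@[simp] lemma evalLM_apply {Γ : Type*} (γ : Γ) (f : lp (fun _ : Γ => ℝ) ⊤) :
    evalLM γ f = f γ := rfl

lemma ind_apply_s7 {Γ : Type*} (A : Set Γ) (γ : Γ) [Decidable (γ ∈ A)] :
    (ind A : ∀ _ : Γ, ℝ) γ = if γ ∈ A then 1 else 0 := by
  show A.indicator 1 γ = _
  rw [Set.indicator_apply]
  split <;> rfl

theorem unimodular_sum_close_to_Zsub {Γ : Type*} [Infinite Γ] (𝒜 : Set (Set Γ))
    (h𝒜 : AlmostDisjoint 𝒜) (m : ℕ) (A : Fin m → Set Γ) (hA : ∀ j, A j ∈ 𝒜)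
    (hinj : Function.Injective A) (σ : Fin m → ℝ) (hσ : ∀ j, |σ j| = 1) :
    (∑ N ∈ Finset.univ.powerset.filter (fun N : Finset (Fin m) => 2 ≤ N.card),
        ((-1 : ℝ) ^ N.card * ∑ j ∈ N, σ j) • ind (⋂ j ∈ N, A j)) ∈ Zsub 𝒜 ∧
    ‖(∑ j : Fin m, σ j • ind (A j)) -
        ∑ N ∈ Finset.univ.powerset.filter (fun N : Finset (Fin m) => 2 ≤ N.card),
          ((-1 : ℝ) ^ N.card * ∑ j ∈ N, σ j) • ind (⋂ j ∈ N, A j)‖ ≤ 1 := by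
  classical
  constructor
  · refine Submodule.sum_mem _ fun N hN => Submodule.smul_mem _ _ ?_
    have h2 : 2 ≤ N.card := (Finset.mem_filter.mp hN).2
    have hn : N.card = (N.card - 2) + 2 := by omega
    apply Submodule.le_topologicalClosure
    apply Submodule.subset_span
    refine ⟨N.card - 2, fun i => A ((N.orderIsoOfFin hn i : N) : Fin m),
      fun i => hA _, ?_, ?_⟩
    · intro i i' hii
      exact (N.orderIsoOfFin hn).injective (Subtype.ext (hinj hii))
    · refine congrArg ind ?_
      ext x
      simp only [Set.mem_iInter]
      constructor
      · intro hx i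
        exact hx _ (Finset.coe_mem _)
      · intro hx j hj
        have := hx ((N.orderIsoOfFin hn).symm ⟨j, hj⟩)
        simpa using this
  · apply lp.norm_le_of_forall_le zero_le_one
    intro γ
    set y : lp (fun _ : Γ => ℝ) ⊤ := ∑ j : Fin m, σ j • ind (A j) with hy
    set z : lp (fun _ : Γ => ℝ) ⊤ :=
      ∑ N ∈ Finset.univ.powerset.filter (fun N : Finset (Fin m) => 2 ≤ N.card),
        ((-1 : ℝ) ^ N.card * ∑ j ∈ N, σ j) • ind (⋂ j ∈ N, A j) with hz
    set T : Finset (Fin m) := Finset.univ.filter (fun j => γ ∈ A j) with hT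
    have hmem : ∀ N : Finset (Fin m), (γ ∈ ⋂ j ∈ N, A j) ↔ N ⊆ T := by
      intro N
      simp only [Set.mem_iInter, hT, Finset.subset_iff, Finset.mem_filter, Finset.mem_univ,
        true_and]
    have hyv : evalLM γ y = ∑ j ∈ T, σ j := by
      rw [hy, map_sum, hT, Finset.sum_filter]
      refine Finset.sum_congr rfl fun j _ => ?_
      rw [map_smul, smul_eq_mul, evalLM_apply, ind_apply_s7]
      split <;> ring
    have hzv : evalLM γ z = if 2 ≤ T.card then ∑ j ∈ T, σ j else 0 := by
      rw [hz, map_sum, ← key_sum σ T]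
      have hPT : T.powerset.filter (fun N => 2 ≤ N.card)
          = ((Finset.univ.powerset.filter (fun N : Finset (Fin m) => 2 ≤ N.card)).filter
              (fun N => N ⊆ T)) := by
        ext N
        simp only [Finset.mem_filter, Finset.mem_powerset, Finset.subset_univ, true_and]
        tauto
      conv_rhs => rw [hPT, Finset.sum_filter]
      refine Finset.sum_congr rfl fun N _ => ?_
      rw [map_smul, smul_eq_mul, evalLM_apply, ind_apply_s7]
      by_cases hNT : N ⊆ T
      · rw [if_pos hNT, if_pos ((hmem N).mpr hNT), mul_one]
      · rw [if_neg hNT, if_neg (fun hc => hNT ((hmem N).mp hc)), mul_zero]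
    have hval : (y - z : lp (fun _ : Γ => ℝ) ⊤) γ = evalLM γ y - evalLM γ z := by
      rw [← map_sub]
      rfl
    rw [hval, hyv, hzv]
    by_cases h2 : 2 ≤ T.card
    · rw [if_pos h2]
      simp
    · rw [if_neg h2, sub_zero]
      have hle : (T.card : ℝ) ≤ 1 := by exact_mod_cast (by omega : T.card ≤ 1)
      calc ‖∑ j ∈ T, σ j‖ = |∑ j ∈ T, σ j| := rfl
        _ ≤ ∑ j ∈ T, |σ j| := Finset.abs_sum_le_sum_abs _ _
        _ = (T.card : ℝ) := by simp [hσ]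
        _ ≤ 1 := hle
end

section
/- For every infinite cardinal Γ there exists an almost disjoint family 𝒜 ⊆ [Γ]^Γ (each member of cardinality Γ, pairwise intersections of cardinality < Γ) with |𝒜| > Γ. (Sierpiński) -/
/-!
Fix a well-order of `Γ` of order type the initial ordinal of `#Γ`, so that every initial segment
has fewer than `#Γ` elements. Given any `#Γ` functions `h b : Γ → Γ`, choose `g a` outside
`{h b a | b ≤ a}`; then `g` agrees with each `h b` only below `b`. Hence a maximal family of
functions `Γ → Γ` that pairwise agree on fewer than `#Γ` points has more than `#Γ` members, and
the graphs of its members, transported along `Γ × Γ ≃ Γ`, form the required family.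
-/

open Cardinal Set Function

universe u

theorem Set.exists_maximal_pairwise {α : Type*} (r : α → α → Prop) :
    ∃ s : Set α, Maximal (·.Pairwise r) s :=
  zorn_subset {s | s.Pairwise r} fun c hc hchain =>
    ⟨⋃₀ c, (pairwise_sUnion hchain.directedOn).2 hc, fun _ => subset_sUnion_of_mem⟩

theorem Cardinal.exists_subset_range_of_mk_le {α β : Type u} [Nonempty β] {s : Set β}
    (h : #s ≤ #α) : ∃ f : α → β, s ⊆ range f := by
  obtain ⟨e⟩ := h
  exact ⟨extend e Subtype.val fun _ => Classical.arbitrary β,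
    fun b hb => ⟨e ⟨b, hb⟩, e.injective.extend_apply _ _ _⟩⟩

theorem Set.mk_graphOn {α β : Type u} (f : α → β) (s : Set α) : #(s.graphOn f) = #s :=
  mk_image_eq fun _ _ h => (Prod.ext_iff.1 h).1

theorem Set.graphOn_univ_inter_graphOn_univ {α β : Type*} (f g : α → β) :
    univ.graphOn f ∩ univ.graphOn g = {a | f a = g a}.graphOn f := by
  ext ⟨a, b⟩
  simp only [mem_inter_iff, mem_graphOn, mem_univ, true_and, mem_ofPred_eq]
  grind

section EventuallyDifferent

variable {ι : Type u} [LinearOrder ι]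

theorem exists_forall_setOf_eq_subset_Iio {β : Type u} (h : ι → ι → β)
    (hIic : ∀ a : ι, #(Iic a) < #β) : ∃ g : ι → β, ∀ b, {a | g a = h b a} ⊆ Iio b := by
  have hdiag (a : ι) : ((fun b => h b a) '' Iic a)ᶜ.Nonempty :=
    compl_nonempty_of_mk_lt_mk (mk_image_le.trans_lt (hIic a))
  choose g hg using hdiag
  exact ⟨g, fun b a hab => not_le.1 fun hba => hg a ⟨b, hba, hab.symm⟩⟩

theorem exists_pairwise_mk_setOf_eq_lt_and_lt_mk (hIic : ∀ a : ι, #(Iic a) < #ι) :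
    ∃ F : Set (ι → ι), F.Pairwise (fun f g => #{a | f a = g a} < #ι) ∧ #ι < #F := by
  obtain ⟨F, hF⟩ := exists_maximal_pairwise fun f g : ι → ι => #{a | f a = g a} < #ι
  refine ⟨F, hF.prop, not_le.1 fun hle => ?_⟩
  have : Nonempty (ι → ι) := ⟨id⟩
  obtain ⟨h, hFh⟩ := exists_subset_range_of_mk_le hle
  obtain ⟨g, hg⟩ := exists_forall_setOf_eq_subset_Iio h hIic
  have hsmall (b : ι) : #{a | g a = h b a} < #ι :=
    (mk_le_mk_of_subset ((hg b).trans Iio_subset_Iic_self)).trans_lt (hIic b)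
  have hgF : insert g F ⊆ F := by
    refine hF.2 (hF.prop.insert fun f hf _ => ?_) (subset_insert g F)
    obtain ⟨c, rfl⟩ := hFh hf
    exact ⟨hsmall c, by simpa only [eq_comm] using hsmall c⟩
  obtain ⟨b, hb⟩ := hFh (hgF (mem_insert g F))
  exact lt_irrefl b (hg b (congrFun hb.symm b))

end EventuallyDifferent

/-- Sierpiński's theorem: every infinite cardinal admits an almost disjoint family of
full-sized subsets whose cardinality exceeds that of the index set. -/
theorem sierpinski_almost_disjoint (Γ : Type*) [Infinite Γ] :
    ∃ 𝒜 : Set (Set Γ), (∀ A ∈ 𝒜, #A = #Γ) ∧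
      (∀ A ∈ 𝒜, ∀ B ∈ 𝒜, A ≠ B → #(↥(A ∩ B)) < #Γ) ∧ #Γ < #𝒜 := by
  obtain ⟨_, _, hord⟩ := exists_ord_eq_type_lt Γ
  obtain ⟨F, hF, hΓF⟩ :=
    exists_pairwise_mk_setOf_eq_lt_and_lt_mk fun a : Γ => mk_Iic_lt a hord (aleph0_le_mk Γ)
  obtain ⟨e⟩ : Nonempty (Γ × Γ ≃ Γ) := Cardinal.eq.1 (by simp)
  refine ⟨(fun f => e '' univ.graphOn f) '' F, ?_, ?_, ?_⟩
  · rintro _ ⟨f, -, rfl⟩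
    rw [mk_image_eq e.injective, mk_graphOn, mk_univ]
  · rintro _ ⟨f, hf, rfl⟩ _ ⟨g, hg, rfl⟩ hne
    rw [← image_inter e.injective, graphOn_univ_inter_graphOn_univ, mk_image_eq e.injective,
      mk_graphOn]
    exact hF hf hg fun hfg => hne (hfg ▸ rfl)
  · rwa [mk_image_eq fun f g hfg => graphOn_univ_injective (image_injective.2 e.injective hfg)]
end

section
/- Let 𝒜 be an uncountable almost disjoint family of infinite subsets of ℕ and let K_𝒜 be the associated Mrówka space with isolated points {x_n : n ∈ ℕ} and points {y_A : A ∈ 𝒜}. Suppose T : C_0(K_𝒜) → ℓ_∞ is a bounded operator with T(1_{{x_n}}) = 0 for all n. Then 𝒜 contains a subfamily 𝒜' with |𝒜'| = |𝒜| such that T(1_{U(A,F)}) = 0 for every A ∈ 𝒜' and every finite F ⊆ ℕ, where U(A,F) = {x_n : n ∈ A \ F} ∪ {y_A}. -/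
/-!
Since `T` kills every `1_{x_n}`, the value `T (1_{U(A,F)})` is unchanged when `U(A,F)` is cut down
by finitely many isolated points. Fix a coordinate `k` and `δ > 0`, and suppose `N` members `A`
of `𝒜` have some `|T (1_{U(A,F)}) k| ≥ δ`. Almost disjointness lets us shrink these neighbourhoods
until they are pairwise disjoint; the signed sum of their indicators then has norm `≤ 1` while its
image has `k`-th coordinate `≥ N δ`, so `N ≤ ‖T‖ / δ`. Hence only countably many `A` have some
`T (1_{U(A,F)}) ≠ 0`, and discarding them from the uncountable family `𝒜` keeps its cardinality.
-/

open Cardinal Set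

/-- The underlying set of the Mrówka space associated with an almost disjoint family `𝒜`
of subsets of `ℕ`: the isolated points `x_n` are `Sum.inl n` and the points `y_A` are
`Sum.inr A`. -/
def Mrowka (𝒜 : Set (Set ℕ)) : Type := ℕ ⊕ ↥𝒜

/-- The basic neighbourhood `U(A, F) = {x_n : n ∈ A \ F} ∪ {y_A}` of the point `y_A`. -/
def mrowkaNbhd {𝒜 : Set (Set ℕ)} (A : ↥𝒜) (F : Finset ℕ) : Set (Mrowka 𝒜) :=
  (Sum.inl '' ((A : Set ℕ) \ (F : Set ℕ))) ∪ {Sum.inr A}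

/-- The Mrówka topology: points `x_n` are isolated and the sets `U(A, F)` form a
neighbourhood basis at `y_A`. -/
instance (𝒜 : Set (Set ℕ)) : TopologicalSpace (Mrowka 𝒜) :=
  TopologicalSpace.generateFrom
    ({s | ∃ n : ℕ, s = {Sum.inl n}} ∪ {s | ∃ (A : ↥𝒜) (F : Finset ℕ), s = mrowkaNbhd A F})

/-- An almost disjoint family of infinite subsets of `ℕ`. -/
def ADFamily (𝒜 : Set (Set ℕ)) : Prop :=
  (∀ A ∈ 𝒜, A.Infinite) ∧ ∀ A ∈ 𝒜, ∀ B ∈ 𝒜, A ≠ B → (A ∩ B).Finite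


open ZeroAtInfty

namespace ZeroAtInftyContinuousMap

variable {X : Type*} [TopologicalSpace X]

@[simp]
lemma coe_sum {β : Type*} [TopologicalSpace β] [AddCommMonoid β] [ContinuousAdd β] {ι : Type*}
    (t : Finset ι) (g : ι → C₀(X, β)) : ⇑(∑ i ∈ t, g i) = ∑ i ∈ t, ⇑(g i) :=
  map_sum (⟨⟨(⇑), rfl⟩, coe_add⟩ : C₀(X, β) →+ X → β) g t

noncomputable def indicatorOfIsClopen {β : Type*} [TopologicalSpace β] [Zero β] {s : Set X}
    (hs : IsClopen s) (hc : IsCompact s) (c : β) : C₀(X, β) where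
  toFun := s.indicator fun _ ↦ c
  continuous_toFun := hs.continuous_indicator continuous_const
  zero_at_infty' := tendsto_const_nhds.congr' <|
    Filter.eventuallyEq_of_mem hc.compl_mem_cocompact fun _ hx ↦ (Set.indicator_of_notMem hx _).symm

lemma norm_sum_smul_le_one_of_pairwiseDisjoint {ι : Type*} {t : Finset ι} {s : ι → Set X}
    (hs : (t : Set ι).PairwiseDisjoint s) {g : ι → C₀(X, ℝ)}
    (hg : ∀ i ∈ t, ⇑(g i) = (s i).indicator 1) {c : ι → ℝ} (hc : ∀ i ∈ t, |c i| ≤ 1) :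
    ‖∑ i ∈ t, c i • g i‖ ≤ 1 := by
  rw [← norm_toBCF_eq_norm, BoundedContinuousFunction.norm_le zero_le_one]
  intro x
  have hx : (∑ i ∈ t, c i • g i) x = ∑ i ∈ t, c i * (s i).indicator 1 x := by
    simp only [coe_sum, coe_smul, Finset.sum_apply, Pi.smul_apply, smul_eq_mul]
    exact Finset.sum_congr rfl fun i hi ↦ by rw [hg i hi]
  change |(∑ i ∈ t, c i • g i) x| ≤ 1
  rw [hx]
  by_cases hmem : ∃ j ∈ t, x ∈ s j
  · obtain ⟨j, hj, hxj⟩ := hmem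
    rw [Finset.sum_eq_single_of_mem j hj fun i hi hij ↦ by
      rw [Set.indicator_of_notMem fun hxi ↦ hij (hs.elim_set hi hj x hxi hxj), mul_zero]]
    simpa [Set.indicator_of_mem hxj] using hc j hj
  · push Not at hmem
    rw [Finset.sum_eq_zero fun i hi ↦ by rw [Set.indicator_of_notMem (hmem i hi), mul_zero]]
    simp

lemma sum_abs_le_opNorm_of_pairwiseDisjoint (φ : C₀(X, ℝ) →L[ℝ] ℝ) {ι : Type*} {t : Finset ι}
    {s : ι → Set X} (hs : (t : Set ι).PairwiseDisjoint s) {g : ι → C₀(X, ℝ)}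
    (hg : ∀ i ∈ t, ⇑(g i) = (s i).indicator 1) :
    ∑ i ∈ t, |φ (g i)| ≤ ‖φ‖ := by
  set G := ∑ i ∈ t, (SignType.sign (φ (g i)) : ℝ) • g i
  have hG : ‖G‖ ≤ 1 :=
    norm_sum_smul_le_one_of_pairwiseDisjoint hs hg fun i _ ↦ by
      rcases lt_trichotomy (φ (g i)) 0 with h | h | h <;> simp [h]
  calc ∑ i ∈ t, |φ (g i)| = φ G := by simp [G, map_sum, map_smul]
    _ ≤ ‖φ‖ * ‖G‖ := (le_abs_self _).trans (φ.le_opNorm G)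
    _ ≤ ‖φ‖ := mul_le_of_le_one_right (norm_nonneg φ) hG

end ZeroAtInftyContinuousMap

lemma sum_smul_indicator_singleton_eq_indicator_image {ι Y R : Type*} [Semiring R] {φ : ι → Y}
    (hφ : φ.Injective) (S : Finset ι) (f : Y → R) :
    ∑ n ∈ S, f (φ n) • ({φ n} : Set Y).indicator (fun _ ↦ (1 : R)) = (φ '' S).indicator f := by
  classical
  ext x
  by_cases hx : x ∈ φ '' S
  · obtain ⟨n, hn, rfl⟩ := hx
    simp [Finset.sum_apply, Pi.single_apply, hφ.eq_iff, hφ.mem_set_image, Finset.mem_coe.1 hn]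
  · rw [Set.indicator_of_notMem hx, Finset.sum_apply]
    refine Finset.sum_eq_zero fun n hn ↦ ?_
    rw [Pi.smul_apply, Set.indicator_of_notMem, smul_zero]
    exact fun h ↦ hx ⟨n, hn, h.symm⟩

lemma Cardinal.mk_sdiff_eq_of_countable {α : Type*} {s t : Set α} (hs : ¬s.Countable)
    (ht : t.Countable) : #(s \ t : Set α) = #s := by
  have hinf : ℵ₀ ≤ #(s \ t : Set α) := by
    by_contra h
    exact hs (((le_aleph0_iff_set_countable.1 (not_le.1 h).le).union ht).mono
      (subset_sdiff_union s t))
  refine le_antisymm (mk_le_mk_of_subset sdiff_subset) ?_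
  calc #s ≤ #(s \ t : Set α) + #t := le_mk_sdiff_add_mk s t
    _ = #(s \ t : Set α) := add_eq_left hinf (ht.le_aleph0.trans hinf)

namespace Mrowka

variable {𝒜 : Set (Set ℕ)}

lemma inl_mem_mrowkaNbhd {A : ↥𝒜} {F : Finset ℕ} {m : ℕ} :
    (Sum.inl m : Mrowka 𝒜) ∈ mrowkaNbhd A F ↔ m ∈ (A : Set ℕ) ∧ m ∉ F := by
  -- `Mrowka 𝒜` is not reducible, so `simp` needs the set retyped in `ℕ ⊕ ↥𝒜`.
  change Sum.inl m ∈ (Sum.inl '' ((A : Set ℕ) \ (F : Set ℕ)) ∪ {Sum.inr A} : Set (ℕ ⊕ ↥𝒜)) ↔ _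
  simp

lemma inr_mem_mrowkaNbhd {A B : ↥𝒜} {F : Finset ℕ} :
    (Sum.inr B : Mrowka 𝒜) ∈ mrowkaNbhd A F ↔ B = A := by
  change Sum.inr B ∈ (Sum.inl '' ((A : Set ℕ) \ (F : Set ℕ)) ∪ {Sum.inr A} : Set (ℕ ⊕ ↥𝒜)) ↔ _
  simp

lemma isOpen_singleton_inl (n : ℕ) : IsOpen ({Sum.inl n} : Set (Mrowka 𝒜)) :=
  .basic _ (.inl ⟨n, rfl⟩)

lemma isOpen_mrowkaNbhd (A : ↥𝒜) (F : Finset ℕ) : IsOpen (mrowkaNbhd A F) :=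
  .basic _ (.inr ⟨A, F, rfl⟩)

lemma isClopen_singleton_inl (n : ℕ) : IsClopen ({Sum.inl n} : Set (Mrowka 𝒜)) := by
  refine ⟨isOpen_compl_iff.1 <| isOpen_iff_forall_mem_open.2 fun x hx ↦ ?_, isOpen_singleton_inl n⟩
  cases x with
  | inl m => exact ⟨{Sum.inl m}, singleton_subset_iff.2 hx, isOpen_singleton_inl m, rfl⟩
  | inr B =>
    refine ⟨mrowkaNbhd B {n}, fun y hy hyn ↦ ?_, isOpen_mrowkaNbhd B {n},
      inr_mem_mrowkaNbhd.2 rfl⟩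
    obtain rfl : y = Sum.inl n := hyn
    exact (inl_mem_mrowkaNbhd.1 hy).2 (Finset.mem_singleton_self n)

lemma mrowkaNbhd_anti (A : ↥𝒜) {F G : Finset ℕ} (h : F ⊆ G) :
    mrowkaNbhd A G ⊆ mrowkaNbhd A F := by
  rintro (m | B) hx
  · obtain ⟨hmA, hmG⟩ := inl_mem_mrowkaNbhd.1 hx
    exact inl_mem_mrowkaNbhd.2 ⟨hmA, fun hm ↦ hmG (h hm)⟩
  · exact inr_mem_mrowkaNbhd.2 (inr_mem_mrowkaNbhd.1 hx)

lemma compl_image_inl_inter_mrowkaNbhd (A : ↥𝒜) (F S : Finset ℕ) :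
    (Sum.inl '' (S : Set ℕ) : Set (Mrowka 𝒜))ᶜ ∩ mrowkaNbhd A F = mrowkaNbhd A (F ∪ S) := by
  change (Sum.inl '' (S : Set ℕ))ᶜ ∩ (Sum.inl '' ((A : Set ℕ) \ F) ∪ {Sum.inr A} : Set (ℕ ⊕ ↥𝒜)) =
    Sum.inl '' ((A : Set ℕ) \ ↑(F ∪ S)) ∪ {Sum.inr A}
  ext (m | B)
  · simp only [mem_inter_iff, mem_compl_iff, mem_union, mem_image, mem_sdiff, mem_insert_iff,
      union_singleton, SetLike.mem_coe, Finset.coe_union, Sum.inl.injEq, exists_eq_right,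
      reduceCtorEq, false_or, not_or]
    tauto
  · simp

lemma exists_pairwiseDisjoint_mrowkaNbhd (h𝒜 : 𝒜.Pairwise fun A B ↦ (A ∩ B).Finite)
    (t : Finset ↥𝒜) :
    ∃ F : ↥𝒜 → Finset ℕ, (t : Set ↥𝒜).PairwiseDisjoint fun A ↦ mrowkaNbhd A (F A) := by
  have hfin : ∀ A : ↥𝒜, (⋃ B ∈ t.erase A, (A : Set ℕ) ∩ B).Finite := fun A ↦
    (t.erase A).finite_toSet.biUnion fun B hB ↦
      h𝒜 A.2 B.2 (Subtype.coe_injective.ne (Finset.ne_of_mem_erase hB).symm)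
  refine ⟨fun A ↦ (hfin A).toFinset, fun A _ B hB hAB ↦ disjoint_left.2 ?_⟩
  rintro (n | C) hA' hB'
  · have hnA := inl_mem_mrowkaNbhd.1 hA'
    exact hnA.2 <| (hfin A).mem_toFinset.2 <|
      mem_biUnion (Finset.mem_erase.2 ⟨hAB.symm, hB⟩) ⟨hnA.1, (inl_mem_mrowkaNbhd.1 hB').1⟩
  · exact hAB ((inr_mem_mrowkaNbhd.1 hA').symm.trans (inr_mem_mrowkaNbhd.1 hB'))

lemma exists_eq_indicator_compl_image_inl_and_map_eq {E : Type*} [AddCommGroup E] [Module ℝ E]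
    [TopologicalSpace E] (T : C₀(Mrowka 𝒜, ℝ) →L[ℝ] E)
    (hker : ∀ (n : ℕ) (f : C₀(Mrowka 𝒜, ℝ)),
      ⇑f = Set.indicator {Sum.inl n} (1 : Mrowka 𝒜 → ℝ) → T f = 0)
    (f : C₀(Mrowka 𝒜, ℝ)) (S : Finset ℕ) :
    ∃ g : C₀(Mrowka 𝒜, ℝ),
      ⇑g = (Sum.inl '' (S : Set ℕ) : Set (Mrowka 𝒜))ᶜ.indicator f ∧ T g = T f := by
  let e n : C₀(Mrowka 𝒜, ℝ) :=
    ZeroAtInftyContinuousMap.indicatorOfIsClopen (isClopen_singleton_inl n) isCompact_singleton 1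
  refine ⟨f - ∑ n ∈ S, f (Sum.inl n) • e n, ?_, ?_⟩
  · rw [Set.indicator_compl, ZeroAtInftyContinuousMap.coe_sub, ZeroAtInftyContinuousMap.coe_sum]
    exact congrArg (⇑f - ·) (sum_smul_indicator_singleton_eq_indicator_image Sum.inl_injective S f)
  · simp [map_sum, map_smul, hker _ (e _) rfl]

lemma card_mul_le_opNorm (h𝒜 : 𝒜.Pairwise fun A B ↦ (A ∩ B).Finite)
    (T : C₀(Mrowka 𝒜, ℝ) →L[ℝ] lp (fun _ : ℕ => ℝ) ⊤)
    (hker : ∀ (n : ℕ) (f : C₀(Mrowka 𝒜, ℝ)),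
      ⇑f = Set.indicator {Sum.inl n} (1 : Mrowka 𝒜 → ℝ) → T f = 0)
    (k : ℕ) {δ : ℝ} {t : Finset ↥𝒜}
    (ht : ∀ A ∈ t, ∃ (F : Finset ℕ) (f : C₀(Mrowka 𝒜, ℝ)),
      ⇑f = (mrowkaNbhd A F).indicator 1 ∧ δ ≤ |T f k|) :
    t.card * δ ≤ ‖T‖ := by
  choose! F' f hf hδ using ht
  obtain ⟨F, hF⟩ := exists_pairwiseDisjoint_mrowkaNbhd h𝒜 t
  choose g hg hTg using fun A ↦ exists_eq_indicator_compl_image_inl_and_map_eq T hker (f A) (F A)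
  have hg' : ∀ A ∈ t, ⇑(g A) = (mrowkaNbhd A (F' A ∪ F A)).indicator 1 := fun A hA ↦ by
    rw [hg, hf A hA, indicator_indicator, compl_image_inl_inter_mrowkaNbhd]
  have hdisj : (t : Set ↥𝒜).PairwiseDisjoint fun A ↦ mrowkaNbhd A (F' A ∪ F A) :=
    hF.mono_on fun A _ ↦ mrowkaNbhd_anti A Finset.subset_union_right
  let φ := (lp.evalCLM ℝ (fun _ : ℕ => ℝ) ⊤ k).comp T
  have hφ : ‖φ‖ ≤ ‖T‖ := φ.opNorm_le_bound (norm_nonneg T) fun f ↦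
    (lp.norm_apply_le_norm ENNReal.top_ne_zero (T f) k).trans (T.le_opNorm f)
  calc t.card * δ = ∑ A ∈ t, δ := by simp
    _ ≤ ∑ A ∈ t, |φ (g A)| := Finset.sum_le_sum fun A hA ↦ by
      simpa [φ, lp.evalCLM, hTg] using hδ A hA
    _ ≤ ‖φ‖ := ZeroAtInftyContinuousMap.sum_abs_le_opNorm_of_pairwiseDisjoint φ hdisj hg'
    _ ≤ ‖T‖ := hφ

lemma finite_setOf_le_abs_apply (h𝒜 : 𝒜.Pairwise fun A B ↦ (A ∩ B).Finite)
    (T : C₀(Mrowka 𝒜, ℝ) →L[ℝ] lp (fun _ : ℕ => ℝ) ⊤)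
    (hker : ∀ (n : ℕ) (f : C₀(Mrowka 𝒜, ℝ)),
      ⇑f = Set.indicator {Sum.inl n} (1 : Mrowka 𝒜 → ℝ) → T f = 0)
    (k : ℕ) {δ : ℝ} (hδ : 0 < δ) :
    {A : ↥𝒜 | ∃ (F : Finset ℕ) (f : C₀(Mrowka 𝒜, ℝ)),
      ⇑f = (mrowkaNbhd A F).indicator 1 ∧ δ ≤ |T f k|}.Finite := by
  by_contra hinf
  obtain ⟨N, hN⟩ := exists_nat_gt (‖T‖ / δ)
  obtain ⟨t, hts, rfl⟩ := Set.Infinite.exists_subset_card_eq hinf N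
  have := card_mul_le_opNorm h𝒜 T hker k fun A hA ↦ hts hA
  rw [div_lt_iff₀ hδ] at hN
  linarith

lemma countable_setOf_map_ne_zero (h𝒜 : 𝒜.Pairwise fun A B ↦ (A ∩ B).Finite)
    (T : C₀(Mrowka 𝒜, ℝ) →L[ℝ] lp (fun _ : ℕ => ℝ) ⊤)
    (hker : ∀ (n : ℕ) (f : C₀(Mrowka 𝒜, ℝ)),
      ⇑f = Set.indicator {Sum.inl n} (1 : Mrowka 𝒜 → ℝ) → T f = 0) :
    {A : ↥𝒜 | ∃ (F : Finset ℕ) (f : C₀(Mrowka 𝒜, ℝ)),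
      ⇑f = (mrowkaNbhd A F).indicator 1 ∧ T f ≠ 0}.Countable := by
  refine (countable_iUnion fun k ↦ countable_iUnion fun m : ℕ ↦
    (finite_setOf_le_abs_apply h𝒜 T hker k (Nat.one_div_pos_of_nat (n := m))).countable).mono ?_
  rintro A ⟨F, f, hf, hTf⟩
  obtain ⟨k, hk⟩ : ∃ k, T f k ≠ 0 := by
    by_contra! h
    exact hTf (lp.ext (funext h))
  obtain ⟨m, hm⟩ := exists_nat_one_div_lt (abs_pos.2 hk)
  exact mem_iUnion₂.2 ⟨k, m, F, f, hf, hm.le⟩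

end Mrowka

open Mrowka in
theorem mrowka_kernel_theorem (𝒜 : Set (Set ℕ)) (had : ADFamily 𝒜) (hunc : ¬𝒜.Countable)
    (T : C₀(Mrowka 𝒜, ℝ) →L[ℝ] lp (fun _ : ℕ => ℝ) ⊤)
    (hker : ∀ (n : ℕ) (f : C₀(Mrowka 𝒜, ℝ)),
      ⇑f = Set.indicator {Sum.inl n} (1 : Mrowka 𝒜 → ℝ) → T f = 0) :
    ∃ 𝒜' ⊆ 𝒜, #𝒜' = #𝒜 ∧
      ∀ (A : ↥𝒜), (A : Set ℕ) ∈ 𝒜' → ∀ (F : Finset ℕ) (f : C₀(Mrowka 𝒜, ℝ)),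
        ⇑f = Set.indicator (mrowkaNbhd A F) (1 : Mrowka 𝒜 → ℝ) → T f = 0 := by
  have hBad := countable_setOf_map_ne_zero (fun A hA B hB hAB ↦ had.2 A hA B hB hAB) T hker
  refine ⟨𝒜 \ Subtype.val '' _, sdiff_subset, mk_sdiff_eq_of_countable hunc (hBad.image _), ?_⟩
  intro A hA F f hf
  by_contra hTf
  exact hA.2 ⟨A, ⟨F, f, hf, hTf⟩, rfl⟩
end

section
/- Let W be a closed subspace of a Banach space X such that the quotient X/W is separable. Then there exists a bounded operator T : X → X with ker T = W. -/
/-!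
`T` is the quotient map followed by an injective operator `X ⧸ W → X`. If `X ⧸ W` is
finite-dimensional, a linear section of the quotient map will do. Otherwise `X` is
infinite-dimensional, so it carries unit vectors `x n` and functionals `f k` with
`f k (x n) = 1` for `n = k` and `0` for `n > k`. Take functionals `g n` of norm at most one
separating the points of the separable space `X ⧸ W` (norming functionals of a dense sequence); then
`z ↦ ∑ 2⁻ⁿ g n z • x n` is injective, because `f 0, f 1, …` recover the coefficients of a
vanishing series one at a time.
-/

open Function

section

variable {𝕜 X Y : Type*} [RCLike 𝕜] [NormedAddCommGroup X] [NormedSpace 𝕜 X]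
  [NormedAddCommGroup Y] [NormedSpace 𝕜 Y]

theorem exists_norm_eq_one_forall_apply_eq_zero (hX : ¬FiniteDimensional 𝕜 X)
    (s : Finset (StrongDual 𝕜 X)) : ∃ x : X, ‖x‖ = 1 ∧ ∀ f ∈ s, f x = 0 := by
  let Φ : X →ₗ[𝕜] s → 𝕜 := LinearMap.pi fun f => (f : StrongDual 𝕜 X).toLinearMap
  have hΦ : ¬Injective Φ := fun h => hX (Module.Finite.of_injective Φ h)
  obtain ⟨y, hyΦ, hy⟩ : ∃ y, Φ y = 0 ∧ y ≠ 0 := by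
    simpa [injective_iff_map_eq_zero] using hΦ
  refine ⟨(‖y‖ : 𝕜)⁻¹ • y, norm_smul_inv_norm hy, fun f hf => ?_⟩
  simp [show f y = 0 from congrFun hyΦ ⟨f, hf⟩]

theorem exists_seq_norm_eq_one_dual_triangular (hX : ¬FiniteDimensional 𝕜 X) :
    ∃ (x : ℕ → X) (f : ℕ → StrongDual 𝕜 X), (∀ n, ‖x n‖ = 1) ∧ (∀ n, f n (x n) = 1) ∧
      ∀ k n, k < n → f k (x n) = 0 := by
  classical
  obtain ⟨q, hq, hqr⟩ := exists_seq_of_forall_finset_exists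
    (fun p : X × StrongDual 𝕜 X => ‖p.1‖ = 1 ∧ p.2 p.1 = 1) (fun p p' => p.2 p'.1 = 0)
    fun s _ => by
      obtain ⟨x, hx, hsx⟩ := exists_norm_eq_one_forall_apply_eq_zero hX (s.image Prod.snd)
      obtain ⟨f, -, hfx⟩ := exists_dual_vector 𝕜 x (by simp [hx])
      exact ⟨(x, f), ⟨hx, by simpa [hx] using hfx⟩,
        fun p hp => hsx p.2 (Finset.mem_image_of_mem _ hp)⟩
  exact ⟨fun n => (q n).1, fun n => (q n).2, fun n => (hq n).1, fun n => (hq n).2, hqr⟩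

theorem eq_zero_of_hasSum_smul_eq_zero_of_triangular {x : ℕ → X} {f : ℕ → StrongDual 𝕜 X}
    (hfx : ∀ n, f n (x n) = 1) (htri : ∀ k n, k < n → f k (x n) = 0) {a : ℕ → 𝕜}
    (ha : HasSum (fun n => a n • x n) 0) : a = 0 := by
  funext k
  induction k using Nat.strong_induction_on with
  | _ k ih =>
    have hk : HasSum (fun n => a n * f k (x n)) 0 := by
      simpa using ha.mapL (f k)
    have hsingle : ∀ n ≠ k, a n * f k (x n) = 0 := fun n hn => by
      rcases hn.lt_or_gt with h | h
      · simp [ih n h]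
      · simp [htri k n h]
    simpa [hfx k] using (hk.unique (hasSum_single k hsingle)).symm

theorem exists_seq_dual_norm_le_one_separating [TopologicalSpace.SeparableSpace Y] :
    ∃ g : ℕ → StrongDual 𝕜 Y, (∀ n, ‖g n‖ ≤ 1) ∧ ∀ z, (∀ n, g n z = 0) → z = 0 := by
  obtain ⟨u, hu⟩ := TopologicalSpace.exists_dense_seq Y
  choose g hg1 hgu using fun n => exists_dual_vector'' 𝕜 (u n)
  refine ⟨g, hg1, fun z hz => ?_⟩
  by_contra hz0
  obtain ⟨n, hn⟩ := Metric.denseRange_iff.1 hu z (‖z‖ / 2) (by positivity)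
  rw [dist_eq_norm] at hn
  -- `g n` sees the norm of `u n` but vanishes at the nearby point `z`
  have hun : ‖u n‖ ≤ ‖z - u n‖ := calc
    ‖u n‖ = ‖g n (u n - z)‖ := by simp [hz n, hgu n]
    _ ≤ ‖g n‖ * ‖u n - z‖ := (g n).le_opNorm _
    _ ≤ ‖z - u n‖ := by rw [norm_sub_rev]; exact mul_le_of_le_one_left (norm_nonneg _) (hg1 n)
  linarith [norm_le_norm_add_norm_sub' z (u n)]

theorem exists_injective_of_not_finiteDimensional [CompleteSpace X]
    [TopologicalSpace.SeparableSpace Y] (hX : ¬FiniteDimensional 𝕜 X) :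
    ∃ S : Y →L[𝕜] X, Injective S := by
  obtain ⟨x, f, hx, hfx, htri⟩ := exists_seq_norm_eq_one_dual_triangular hX
  obtain ⟨g, hg, hsep⟩ := exists_seq_dual_norm_le_one_separating (𝕜 := 𝕜) (Y := Y)
  let c : ℕ → 𝕜 := fun n => (2⁻¹ : 𝕜) ^ n
  have hsum : Summable fun n => c n • (g n).smulRight (x n) := by
    refine .of_norm_bounded summable_geometric_two fun n => ?_
    simp only [c, norm_smul, ContinuousLinearMap.norm_smulRight_apply, hx, norm_pow, norm_inv,
      RCLike.norm_ofNat, one_div, inv_pow, mul_one]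
    exact mul_le_of_le_one_right (by positivity) (hg n)
  refine ⟨∑' n, c n • (g n).smulRight (x n),
    (injective_iff_map_eq_zero _).2 fun z hz => hsep z fun n => ?_⟩
  have hz' := hsum.hasSum.mapL (ContinuousLinearMap.apply 𝕜 X z)
  have hcoeff := eq_zero_of_hasSum_smul_eq_zero_of_triangular hfx htri
    (a := fun n => c n * g n z) (by simpa [hz, mul_smul] using hz')
  simpa [c] using congrFun hcoeff n

theorem Submodule.exists_injective_of_finiteDimensional_quotient (W : Submodule 𝕜 X)
    [IsClosed (W : Set X)] [FiniteDimensional 𝕜 (X ⧸ W)] :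
    ∃ S : (X ⧸ W) →L[𝕜] X, Injective S := by
  obtain ⟨σ, hσ⟩ := W.mkQ.exists_rightInverse_of_surjective W.range_mkQ
  exact ⟨LinearMap.toContinuousLinearMap σ,
    LeftInverse.injective (g := W.mkQ) (LinearMap.ext_iff.1 hσ)⟩

end

theorem exists_operator_with_kernel_of_separable_quotient {X : Type*}
    [NormedAddCommGroup X] [NormedSpace ℝ X] [CompleteSpace X]
    (W : Submodule ℝ X) (hW : IsClosed (W : Set X))
    (hsep : TopologicalSpace.SeparableSpace (X ⧸ W)) :
    ∃ T : X →L[ℝ] X, LinearMap.ker (T : X →ₗ[ℝ] X) = W := by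
  obtain ⟨S, hS⟩ : ∃ S : (X ⧸ W) →L[ℝ] X, Injective S := by
    by_cases hfin : FiniteDimensional ℝ (X ⧸ W)
    · exact W.exists_injective_of_finiteDimensional_quotient
    · exact exists_injective_of_not_finiteDimensional fun _ => hfin inferInstance
  refine ⟨S.comp W.mkQL, ?_⟩
  change LinearMap.ker ((S : (X ⧸ W) →ₗ[ℝ] X) ∘ₗ W.mkQ) = W
  rw [LinearMap.ker_comp_of_ker_eq_bot _ (LinearMap.ker_eq_bot.2 hS), W.ker_mkQ]
end
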